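/- Let O ⊆ ℝ² be a nonempty, compact, convex set, let m ∈ {−1, 1}, let γ > 0, r_a > 0, 0 < ε < ε_s, let a ≤ b be reals, and let x : ℝ → ℝ² be such that for every t ∈ [a, b], x t ∉ O and x has derivative u(x t, m) at t (HasDerivAt), where u is the obstacle-avoidance control. If infDist (x a) O ≥ r_a + ε, then infDist (x t) O ≥ r_a + ε for every t ∈ [a, b]; that is, the set of positions at distance at least r_a + ε from the obstacle is invariant along the obstacle-avoidance flow. -/

import Mathlib

open Metric
open scoped RealInnerProductSpace

/-- The rotation `ν_m` (clockwise for `m = 1`, counter-clockwise for `m = -1`):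
`ν_m (w₁, w₂) = (m·w₂, −m·w₁)`. -/
noncomputable def nu (m : ℝ) (w : EuclideanSpace ℝ (Fin 2)) : EuclideanSpace ℝ (Fin 2) :=
  WithLp.toLp 2 ![m * w 1, -(m * w 0)]

lemma inner_nu_self (m : ℝ) (w : EuclideanSpace ℝ (Fin 2)) : ⟪nu m w, w⟫ = 0 := by
  simp [nu, PiLp.inner_apply, Fin.sum_univ_two, RCLike.inner_apply, Matrix.cons_val_zero,
    Matrix.cons_val_one, Matrix.head_cons]
  ring


/-- Flow-mode safety content of Lemma 2 of the paper: along the obstacle-avoidance flow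
`ẋ = u(x, m) = −γκ(x) • x + γ(1 − κ(x)) • v(x, m)`, the set of positions at distance at
least `r_a + ε` from the obstacle is invariant, since `κ` vanishes at distance `r_a + ε`
and the control becomes tangential there. -/
theorem obstacle_avoidance_flow_safety
    (O : Set (EuclideanSpace ℝ (Fin 2)))
    (hOne : O.Nonempty) (hOcomp : IsCompact O) (hOconv : Convex ℝ O)
    (m γ r_a ε ε_s : ℝ) (hm : m = -1 ∨ m = 1)
    (hγ : 0 < γ) (hra : 0 < r_a) (hε : 0 < ε) (hεs : ε < ε_s)
    (proj : EuclideanSpace ℝ (Fin 2) → EuclideanSpace ℝ (Fin 2))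
    (hproj : ∀ q, proj q ∈ O ∧ ‖q - proj q‖ = infDist q O)
    (η : ℝ → ℝ)
    (hη₀ : ∀ s, s ≤ ε → η s = 0)
    (hη₁ : ∀ s, ε ≤ s → s ≤ ε_s → η s = (s - ε) / (ε_s - ε))
    (hη₂ : ∀ s, ε_s ≤ s → η s = 1)
    (κ : EuclideanSpace ℝ (Fin 2) → ℝ)
    (hκ : ∀ x, κ x = η (infDist x O - r_a))
    (v : EuclideanSpace ℝ (Fin 2) → EuclideanSpace ℝ (Fin 2))
    (hv : ∀ x, v x = (‖x‖ / ‖x - proj x‖) • nu m (x - proj x))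
    (u : EuclideanSpace ℝ (Fin 2) → EuclideanSpace ℝ (Fin 2))
    (hu : ∀ x, u x = (-(γ * κ x)) • x + (γ * (1 - κ x)) • v x)
    (a b : ℝ) (hab : a ≤ b)
    (x : ℝ → EuclideanSpace ℝ (Fin 2))
    (hout : ∀ t ∈ Set.Icc a b, x t ∉ O)
    (hderiv : ∀ t ∈ Set.Icc a b, HasDerivAt x (u (x t)) t)
    (hinit : r_a + ε ≤ infDist (x a) O) :
    ∀ t ∈ Set.Icc a b, r_a + ε ≤ infDist (x t) O := by
  haveI : Nonempty ↥O := hOne.to_subtype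
  set c : ℝ := r_a + ε with hc
  set g : ℝ → ℝ := fun t => infDist (x t) O with hg
  by_contra hcon
  push_neg at hcon
  obtain ⟨t₀, ht₀, hlt⟩ := hcon
  have hxc : ∀ t ∈ Set.Icc a b, ContinuousAt x t := fun t ht => (hderiv t ht).continuousAt
  have hgc : ∀ t ∈ Set.Icc a b, ContinuousAt g t := fun t ht =>
    ((continuous_infDist_pt O).continuousAt).comp (hxc t ht)
  -- the last time before t₀ where the distance is still ≥ c
  set S : Set ℝ := {t | t ∈ Set.Icc a t₀ ∧ c ≤ g t} with hS
  have hSne : S.Nonempty := ⟨a, ⟨le_refl a, ht₀.1⟩, hinit⟩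
  have hSbdd : BddAbove S := ⟨t₀, fun t ht => ht.1.2⟩
  set s : ℝ := sSup S with hs
  have hsub : S ⊆ Set.Icc a t₀ := fun t ht => ht.1
  have hscl : s ∈ closure S := csSup_mem_closure hSne hSbdd
  have hsIcc : s ∈ Set.Icc a t₀ := isClosed_Icc.closure_subset ((closure_mono hsub) hscl)
  have hIccsub : Set.Icc a t₀ ⊆ Set.Icc a b := Set.Icc_subset_Icc le_rfl ht₀.2
  have hsab : s ∈ Set.Icc a b := hIccsub hsIcc
  have hgs_ge : c ≤ g s := by
    haveI hne : (nhdsWithin s S).NeBot := mem_closure_iff_nhdsWithin_neBot.1 hscl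
    have ht : Filter.Tendsto g (nhdsWithin s S) (nhds (g s)) :=
      (hgc s hsab).continuousWithinAt
    exact ge_of_tendsto ht (eventually_mem_nhdsWithin.mono fun t htS => htS.2)
  have hst₀ : s < t₀ := lt_of_le_of_ne hsIcc.2 (fun h => absurd hgs_ge (by rw [h]; exact not_le.2 hlt))
  have hIoc_lt : ∀ t ∈ Set.Ioc s t₀, g t < c := by
    intro t ht
    by_contra hge
    push_neg at hge
    have : t ∈ S := ⟨⟨hsIcc.1.trans ht.1.le, ht.2⟩, hge⟩
    exact absurd (le_csSup hSbdd this) (not_le.2 ht.1)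
  have hgs_le : g s ≤ c := by
    haveI hne : (nhdsWithin s (Set.Ioc s t₀)).NeBot := by
      apply mem_closure_iff_nhdsWithin_neBot.1
      rw [closure_Ioc hst₀.ne]
      exact ⟨le_rfl, hst₀.le⟩
    have ht : Filter.Tendsto g (nhdsWithin s (Set.Ioc s t₀)) (nhds (g s)) :=
      (hgc s hsab).continuousWithinAt
    exact le_of_tendsto ht (eventually_mem_nhdsWithin.mono fun t htS => (hIoc_lt t htS).le)
  -- on [s, t₀], g ≤ c
  have hle : ∀ t ∈ Set.Icc s t₀, g t ≤ c := by
    intro t ht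
    rcases eq_or_lt_of_le ht.1 with h | h
    · rw [← h]; exact hgs_le
    · exact (hIoc_lt t ⟨h, ht.2⟩).le
  have hsub2 : Set.Icc s t₀ ⊆ Set.Icc a b := Set.Icc_subset_Icc hsab.1 (ht₀.2)
  -- apply the fencing theorem with f = c - g, B = 0 on [s, t₀]
  have key : ∀ z ∈ Set.Icc s t₀, c - g z ≤ 0 := by
    have hfc : ContinuousOn (fun t => c - g t) (Set.Icc s t₀) := fun t ht =>
      (continuousAt_const.sub (hgc t (hsub2 ht))).continuousWithinAt
    refine image_le_of_liminf_slope_right_le_deriv_boundary (B := fun _ => 0) (B' := fun _ => 0)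
      hfc (by rw [sub_nonpos]; exact hgs_ge) continuousOn_const
      (fun t _ => hasDerivWithinAt_const t _ 0) ?_
    intro t ht r hr
    have htab : t ∈ Set.Icc a b := hsub2 ⟨ht.1, ht.2.le⟩
    have hgtc : g t ≤ c := hle t ⟨ht.1, ht.2.le⟩
    -- the projection point and the outward normal
    set p : EuclideanSpace ℝ (Fin 2) := proj (x t) with hp
    obtain ⟨hpO, hpn⟩ := hproj (x t)
    set w₀ : EuclideanSpace ℝ (Fin 2) := x t - p with hw₀
    have hd_pos : 0 < g t :=
      (hOcomp.isClosed.notMem_iff_infDist_pos hOne).1 (hout t htab)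
    have hdw : ‖w₀‖ = g t := hpn
    have hw₀pos : 0 < ‖w₀‖ := by rw [hdw]; exact hd_pos
    -- projection characterization
    have hsep : ∀ q ∈ O, ⟪w₀, q - p⟫ ≤ 0 := by
      have hiInf : ‖x t - p‖ = ⨅ w : O, ‖x t - w‖ := by
        rw [hpn, infDist_eq_iInf]
        simp_rw [dist_eq_norm]
      exact (norm_eq_iInf_iff_real_inner_le_zero hOconv hpO).1 hiInf
    -- κ vanishes here, so the control is tangential
    have hκ0 : κ (x t) = 0 := by
      rw [hκ]
      refine hη₀ _ ?_
      have h1 : infDist (x t) O = g t := rfl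
      have h2 : (c : ℝ) = r_a + ε := rfl
      linarith
    have hinner_u : ⟪u (x t), w₀⟫ = 0 := by
      rw [hu, hv, hκ0]
      rw [inner_add_left, real_inner_smul_left, real_inner_smul_left, real_inner_smul_left,
        inner_nu_self]
      ring
    -- the linear lower bound ψ
    set ψ : ℝ → ℝ := fun z => ⟪x z - p, w₀⟫ with hψ
    have hψt : ψ t = g t * g t := by
      rw [hψ]
      simp only [← hw₀]
      rw [real_inner_self_eq_norm_mul_norm, hdw]
    have hψlow : ∀ z, ψ z ≤ g z * g t := by
      intro z
      have : ψ z / g t ≤ g z := by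
        show ψ z / g t ≤ infDist (x z) O
        rw [infDist_eq_iInf]
        refine le_ciInf fun q => ?_
        rw [div_le_iff₀ hd_pos, dist_eq_norm]
        have h1 : ψ z = ⟪x z - (q : EuclideanSpace ℝ (Fin 2)), w₀⟫ + ⟪(q : EuclideanSpace ℝ (Fin 2)) - p, w₀⟫ := by
          rw [hψ, ← inner_add_left]
          congr 1
          abel
        have h2 : ⟪(q : EuclideanSpace ℝ (Fin 2)) - p, w₀⟫ ≤ 0 := by
          rw [real_inner_comm]; exact hsep q q.2
        have h3 : ⟪x z - (q : EuclideanSpace ℝ (Fin 2)), w₀⟫ ≤ ‖x z - q‖ * ‖w₀‖ :=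
          real_inner_le_norm _ _
        rw [hdw] at h3
        linarith
      calc ψ z = ψ z / g t * g t := by field_simp
        _ ≤ g z * g t := by exact mul_le_mul_of_nonneg_right this hd_pos.le
    -- ψ has zero derivative at t
    have hψd : HasDerivAt ψ 0 t := by
      have h1 : HasDerivAt (fun z => x z - p) (u (x t)) t := (hderiv t htab).sub_const p
      have h2 : HasDerivAt (fun _ : ℝ => w₀) 0 t := hasDerivAt_const t w₀
      have h3 := h1.inner ℝ h2
      simp only [inner_zero_right, zero_add] at h3
      rwa [hinner_u] at h3
    -- hence the slope of ψ tends to 0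
    have hslope : Filter.Tendsto (slope ψ t) (nhdsWithin t {t}ᶜ) (nhds 0) :=
      hasDerivAt_iff_tendsto_slope.1 hψd
    have hslope' : Filter.Tendsto (slope ψ t) (nhdsWithin t (Set.Ioi t)) (nhds 0) :=
      hslope.mono_left (nhdsWithin_mono t (fun z hz => ne_of_gt hz))
    have hev : ∀ᶠ z in nhdsWithin t (Set.Ioi t), slope ψ t z > -(r * g t) := by
      have : -(r * g t) < 0 := neg_lt_zero.2 (mul_pos hr (by exact hd_pos))
      exact hslope'.eventually (eventually_gt_nhds this)
    have hmem : ∀ᶠ z in nhdsWithin t (Set.Ioi t), z ∈ Set.Ioi t := eventually_mem_nhdsWithin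
    refine ((hev.and hmem).mono ?_).frequently
    rintro z ⟨hz1, hz2⟩
    have hzt : 0 < z - t := sub_pos.2 hz2
    -- slope of f = c - g at t,z
    have : slope (fun t => c - g t) t z = (g t - g z) / (z - t) := by
      rw [slope_def_field]
      ring_nf
    rw [this]
    rw [div_lt_iff₀ hzt]
    -- from ψ bound: g t - g z ≤ (ψ t - ψ z) / g t
    have h4 : ψ t - ψ z ≥ (g t - g z) * g t := by
      have := hψlow z
      rw [hψt]
      nlinarith
    have h5 : slope ψ t z = (ψ z - ψ t) / (z - t) := slope_def_field ψ t z
    have h6 : ψ z - ψ t > -(r * g t) * (z - t) := by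
      have := hz1
      rw [h5] at this
      calc ψ z - ψ t = (ψ z - ψ t) / (z - t) * (z - t) := by field_simp
        _ > -(r * g t) * (z - t) := by
            exact mul_lt_mul_of_pos_right this hzt
    clear_value ψ
    have hA : (g t - g z) * g t < (r * (z - t)) * g t := by linarith [h4, h6]
    exact lt_of_mul_lt_mul_right hA hd_pos.le
  have := key t₀ ⟨hst₀.le, le_rfl⟩
  rw [sub_nonpos] at this
  exact absurd this (not_le.2 hlt)
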